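/- Fix a real number q > 1 and δ ∈ [−1/2, 0). Then for every integer n ≥ 1: ψ_{iδ}(n) is a positive real number, and for every real α with −τ/2 < α ≤ τ/2 and α ≠ 0 one has |ψ_{α+iδ}(n)| < ψ_{iδ}(n). -/

import Mathlib

/-- `q^w = exp(w log q)`. -/
noncomputable def qpow (q : ℝ) (w : ℂ) : ℂ := Complex.exp (w * (Real.log q : ℂ))

/-- `τ = 2π / log q`. -/
noncomputable def tauq (q : ℝ) : ℝ := 2 * Real.pi / Real.log q

/-- The elementary spherical function value `φ_z(n)` on a homogeneous tree of degree
`q+1`: `φ_z(0) = 1` and for `n ≥ 1`,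
`φ_z(n) = (1/(q+1))·[q^{1-n/2}(q^{iz(n+1)} - q^{-iz(n+1)}) - q^{-n/2}(q^{iz(n-1)} - q^{-iz(n-1)})] / (q^{iz} - q^{-iz})`. -/
noncomputable def phiSph (q : ℝ) (z : ℂ) (n : ℕ) : ℂ :=
  if n = 0 then 1 else
    (1 / ((q : ℂ) + 1)) *
      ((qpow q (1 - (n : ℂ) / 2) *
          (qpow q (Complex.I * z * ((n : ℂ) + 1)) - qpow q (-(Complex.I * z) * ((n : ℂ) + 1))) -
        qpow q (-(n : ℂ) / 2) *
          (qpow q (Complex.I * z * ((n : ℂ) - 1)) - qpow q (-(Complex.I * z) * ((n : ℂ) - 1)))) /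
        (qpow q (Complex.I * z) - qpow q (-(Complex.I * z))))

/-- `B_n = 1 + ∑_{j=1}^n (q+1) q^{j-1}`, the volume of the ball of radius `n`. -/
noncomputable def ballVol (q : ℝ) (n : ℕ) : ℝ :=
  1 + ∑ j ∈ Finset.Icc 1 n, (q + 1) * q ^ (j - 1)

/-- The ball-average symbol `ψ_z(n) = (1/B_n)·(1 + ∑_{j=1}^n (q+1) q^{j-1} φ_z(j))`. -/
noncomputable def psiBall (q : ℝ) (z : ℂ) (n : ℕ) : ℂ :=
  (1 / ((ballVol q n : ℝ) : ℂ)) *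
    (1 + ∑ j ∈ Finset.Icc 1 n, (((q + 1) * q ^ (j - 1) : ℝ) : ℂ) * phiSph q z j)

/-!
Put `u = q^{1/2+iz}` and `v = q^{1/2-iz}`, so that `uv = q`. Clearing the denominator
`q^{iz} - q^{-iz}` turns the formula for `φ_z` into
`(u - v)·(q+1)q^{j-1}φ_z(j) = (u^{j+1} - v^{j+1}) - (u^{j-1} - v^{j-1})`, i.e.
`(q+1)q^{j-1}φ_z(j) = ∑_{m ≤ j} c_{j,m} u^{j-m} v^m` with `c_{j,0} = c_{j,j} = 1` and
`c_{j,m} = 1 - 1/q` otherwise. So `B_n ψ_z(n)` is a polynomial in `u, v` with nonnegative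
coefficients. At `z = iδ` both `u` and `v` are positive reals, whence `ψ_{iδ}(n) > 0`; replacing
`z` by `z + α` with `α` real changes neither `|u|` nor `|v|`, so `|ψ_{α+iδ}(n)| ≤ ψ_{iδ}(n)` by the
triangle inequality. It is strict because the terms `1` (`j = 0`) and `u` (`j = 1`) are not
positively proportional: `arg u = α log q ∈ (-π, π] \ {0}`.
-/

open Finset Complex

lemma qpow_add (q : ℝ) (a b : ℂ) : qpow q (a + b) = qpow q a * qpow q b := by
  rw [qpow, add_mul, Complex.exp_add]; rfl

lemma qpow_neg (q : ℝ) (a : ℂ) : qpow q (-a) = (qpow q a)⁻¹ := by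
  rw [qpow, neg_mul, Complex.exp_neg]; rfl

lemma qpow_mul_natCast (q : ℝ) (a : ℂ) (k : ℕ) : qpow q (a * k) = qpow q a ^ k := by
  rw [qpow, mul_comm a, mul_assoc, Complex.exp_nat_mul]; rfl

lemma qpow_ofReal (q x : ℝ) : qpow q x = Real.exp (x * Real.log q) := by
  simp [qpow]

lemma norm_qpow (q : ℝ) (w : ℂ) : ‖qpow q w‖ = Real.exp (w.re * Real.log q) := by
  simp [qpow, Complex.norm_exp]

lemma qpow_one {q : ℝ} (hq : 0 < q) : qpow q 1 = q := by
  simpa [Real.exp_log hq] using qpow_ofReal q 1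

lemma sub_mul_phiSph_succ {q : ℝ} (hq : 0 < q) (z : ℂ) (i : ℕ) :
    (qpow q (1/2 + I * z) - qpow q (1/2 - I * z))
        * (((q + 1) * q ^ i : ℝ) * phiSph q z (i + 1))
      = (qpow q (1/2 + I * z) ^ (i + 2) - qpow q (1/2 - I * z) ^ (i + 2))
        - (qpow q (1/2 + I * z) ^ i - qpow q (1/2 - I * z) ^ i) := by
  rw [phiSph, if_neg i.succ_ne_zero,
    show (1/2 - I * z) = 1/2 + -(I * z) by ring,
    show (1 : ℂ) - ((i + 1 : ℕ) : ℂ) / 2 = 1 + -(1/2) * ((i + 1 : ℕ) : ℂ) by push_cast; ring,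
    show -((i + 1 : ℕ) : ℂ) / 2 = -(1/2) * ((i + 1 : ℕ) : ℂ) by push_cast; ring,
    show I * z * ((i + 1 : ℕ) + 1 : ℂ) = I * z * ((i + 2 : ℕ) : ℂ) by push_cast; ring,
    show -(I * z) * ((i + 1 : ℕ) + 1 : ℂ) = -(I * z) * ((i + 2 : ℕ) : ℂ) by push_cast; ring,
    show I * z * ((i + 1 : ℕ) - 1 : ℂ) = I * z * (i : ℂ) by push_cast; ring,
    show -(I * z) * ((i + 1 : ℕ) - 1 : ℂ) = -(I * z) * (i : ℂ) by push_cast; ring]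
  simp only [qpow_add, qpow_mul_natCast, qpow_neg, qpow_one hq]
  set σ := qpow q (1/2)
  set t := qpow q (I * z)
  have hσ : σ ≠ 0 := Complex.exp_ne_zero _
  have ht : t ≠ 0 := Complex.exp_ne_zero _
  have hσq : (q : ℂ) = σ ^ 2 := by
    rw [← qpow_one hq, sq, ← qpow_add]; norm_num
  have hq1 : σ ^ 2 + 1 ≠ 0 := by
    rw [← hσq]; exact_mod_cast (by linarith : q + 1 ≠ 0)
  by_cases hden : t - t⁻¹ = 0
  · -- both sides vanish; on the left, `phiSph` divides by `0`
    rw [← sub_eq_zero.mp hden]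
    simp
  have hden' : t ^ 2 - 1 ≠ 0 := by
    contrapose! hden
    field_simp
    linear_combination hden
  push_cast
  rw [hσq]
  simp only [mul_pow, inv_pow]
  field_simp
  ring

noncomputable def sphCoeff (q : ℝ) (j m : ℕ) : ℝ := if m = 0 ∨ m = j then 1 else 1 - q⁻¹

lemma sphCoeff_nonneg {q : ℝ} (hq : 1 ≤ q) (j m : ℕ) : 0 ≤ sphCoeff q j m := by
  unfold sphCoeff
  split_ifs
  · exact zero_le_one
  · exact sub_nonneg.2 (inv_le_one_of_one_le₀ hq)

lemma sub_mul_sum_sphCoeff {q : ℝ} (hq : q ≠ 0) {u v : ℂ} (huv : u * v = q) (i : ℕ) :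
    (u - v) * ∑ m ∈ range (i + 2), sphCoeff q (i + 1) m • (u ^ (i + 1 - m) * v ^ m)
      = (u ^ (i + 2) - v ^ (i + 2)) - (u ^ i - v ^ i) := by
  have hmid : ∑ m ∈ range i, sphCoeff q (i + 1) (m + 1) • (u ^ (i + 1 - (m + 1)) * v ^ (m + 1))
      = (1 - (q : ℂ)⁻¹) * (u * v) * ∑ m ∈ range i, v ^ m * u ^ (i - 1 - m) := by
    rw [mul_sum]
    refine sum_congr rfl fun m hm => ?_
    have hm : m < i := mem_range.1 hm
    have hc : sphCoeff q (i + 1) (m + 1) = 1 - q⁻¹ := if_neg (by omega)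
    rw [hc, Complex.real_smul, show i + 1 - (m + 1) = (i - 1 - m) + 1 by omega]
    push_cast
    ring
  have hgeom := geom_sum₂_mul v u i
  have hq' : (q : ℂ) * (q : ℂ)⁻¹ = 1 := mul_inv_cancel₀ (by exact_mod_cast hq)
  rw [sum_range_succ, sum_range_succ', hmid]
  simp only [sphCoeff, true_or, or_true, if_true, one_smul, Nat.sub_zero, Nat.sub_self,
    pow_zero, mul_one, one_mul]
  linear_combination (-(1 - (q : ℂ)⁻¹) * u * v) * hgeom - ((u ^ i - v ^ i) * (q : ℂ)⁻¹) * huv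
    - (u ^ i - v ^ i) * hq'

noncomputable def ballPoly {A : Type*} [CommRing A] [Algebra ℝ A] (q : ℝ) (n : ℕ) (u v : A) :
    A :=
  ∑ j ∈ range (n + 1), ∑ m ∈ range (j + 1), sphCoeff q j m • (u ^ (j - m) * v ^ m)

lemma ballPoly_succ {A : Type*} [CommRing A] [Algebra ℝ A] (q : ℝ) (n : ℕ) (u v : A) :
    ballPoly q (n + 1) u v
      = ballPoly q n u v
        + ∑ m ∈ range (n + 2), sphCoeff q (n + 1) m • (u ^ (n + 1 - m) * v ^ m) :=
  sum_range_succ _ _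

lemma qpow_half_add_mul_qpow_half_sub {q : ℝ} (hq : 0 < q) (w : ℂ) :
    qpow q (1/2 + w) * qpow q (1/2 - w) = q := by
  rw [← qpow_add, ← qpow_one hq]; ring_nf

lemma one_add_sum_phiSph {q : ℝ} (hq : 0 < q) {z : ℂ}
    (hz : qpow q (1/2 + I * z) ≠ qpow q (1/2 - I * z)) (n : ℕ) :
    1 + ∑ j ∈ Icc 1 n, (((q + 1) * q ^ (j - 1) : ℝ) : ℂ) * phiSph q z j
      = ballPoly q n (qpow q (1/2 + I * z)) (qpow q (1/2 - I * z)) := by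
  induction n with
  | zero => simp [ballPoly, sphCoeff]
  | succ i ih =>
    rw [sum_Icc_succ_top (by omega), ← add_assoc, ih, ballPoly_succ, Nat.add_sub_cancel]
    congr 1
    refine mul_left_cancel₀ (sub_ne_zero.2 hz) ?_
    rw [sub_mul_phiSph_succ hq,
      sub_mul_sum_sphCoeff hq.ne' (qpow_half_add_mul_qpow_half_sub hq _)]

lemma ballVol_pos {q : ℝ} (hq : 0 ≤ q) (n : ℕ) : 0 < ballVol q n := by
  unfold ballVol; positivity

lemma qpow_half_add_ne_qpow_half_sub {q : ℝ} (hq : 1 < q) {z : ℂ} (hz : z.im ≠ 0) :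
    qpow q (1/2 + I * z) ≠ qpow q (1/2 - I * z) := by
  intro h
  have h := congrArg norm h
  rw [norm_qpow, norm_qpow, Real.exp_eq_exp, mul_left_inj' (Real.log_pos hq).ne'] at h
  norm_num at h
  exact hz (by linarith)

lemma psiBall_eq_ballPoly {q : ℝ} (hq : 1 < q) {z : ℂ} (hz : z.im ≠ 0) (n : ℕ) :
    psiBall q z n
      = ((ballVol q n)⁻¹ : ℝ) * ballPoly q n (qpow q (1/2 + I * z)) (qpow q (1/2 - I * z)) := by
  rw [psiBall, one_add_sum_phiSph (by linarith) (qpow_half_add_ne_qpow_half_sub hq hz), one_div,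
    Complex.ofReal_inv]

lemma norm_sum_lt_sum_norm_of_not_sameRay {ι E : Type*} [NormedAddCommGroup E]
    [NormedSpace ℝ E] [StrictConvexSpace ℝ E] {s : Finset ι} {f : ι → E} {i j : ι}
    (hi : i ∈ s) (hj : j ∈ s) (hij : ¬SameRay ℝ (f i) (f j)) :
    ‖∑ k ∈ s, f k‖ < ∑ k ∈ s, ‖f k‖ := by
  classical
  have hne : i ≠ j := by rintro rfl; exact hij (SameRay.refl _)
  have hj' : j ∈ s.erase i := mem_erase.2 ⟨hne.symm, hj⟩
  rw [← add_sum_erase s f hi, ← add_sum_erase _ f hj', ← add_sum_erase s _ hi,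
    ← add_sum_erase _ _ hj', ← add_assoc, ← add_assoc]
  calc ‖f i + f j + ∑ k ∈ (s.erase i).erase j, f k‖
      ≤ ‖f i + f j‖ + ‖∑ k ∈ (s.erase i).erase j, f k‖ := norm_add_le _ _
    _ < ‖f i‖ + ‖f j‖ + ∑ k ∈ (s.erase i).erase j, ‖f k‖ :=
      add_lt_add_of_lt_of_le (not_sameRay_iff_norm_add_lt.1 hij) (norm_sum_le _ _)

lemma ballPoly_ofReal (q : ℝ) (n : ℕ) (a b : ℝ) :
    ballPoly q n (a : ℂ) (b : ℂ) = (ballPoly q n a b : ℝ) := by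
  simp [ballPoly, Complex.real_smul]

lemma ballPoly_pos {q : ℝ} (hq : 1 ≤ q) (n : ℕ) {a b : ℝ} (ha : 0 ≤ a) (hb : 0 ≤ b) :
    0 < ballPoly q n a b := by
  refine sum_pos' (fun j _ => sum_nonneg fun m _ => ?_) ⟨0, by simp, by simp [sphCoeff]⟩
  exact smul_nonneg (sphCoeff_nonneg hq j m) (by positivity)

lemma norm_ballPoly_lt {q : ℝ} (hq : 1 ≤ q) {n : ℕ} (hn : 1 ≤ n) {u : ℂ} (hu : ¬SameRay ℝ 1 u)
    (v : ℂ) : ‖ballPoly q n u v‖ < ballPoly q n ‖u‖ ‖v‖ := by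
  rw [ballPoly, ballPoly, sum_sigma', sum_sigma']
  have h₀ : (⟨0, 0⟩ : (_ : ℕ) × ℕ) ∈ (range (n + 1)).sigma fun j => range (j + 1) := by simp
  have h₁ : (⟨1, 0⟩ : (_ : ℕ) × ℕ) ∈ (range (n + 1)).sigma fun j => range (j + 1) := by
    simp; omega
  have hray : ¬SameRay ℝ (sphCoeff q 0 0 • (u ^ (0 - 0) * v ^ 0))
      (sphCoeff q 1 0 • (u ^ (1 - 0) * v ^ 0)) := by
    simpa [sphCoeff] using hu
  convert norm_sum_lt_sum_norm_of_not_sameRay (f := fun p : (_ : ℕ) × ℕ =>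
    sphCoeff q p.1 p.2 • (u ^ (p.1 - p.2) * v ^ p.2)) h₀ h₁ hray using 2 with p
  rw [norm_smul, norm_mul, norm_pow, norm_pow, Real.norm_of_nonneg (sphCoeff_nonneg hq _ _),
    smul_eq_mul]

lemma not_sameRay_one_qpow {q : ℝ} (hq : 1 < q) {w : ℂ} (h₁ : -(tauq q) / 2 < w.im)
    (h₂ : w.im ≤ tauq q / 2) (h₀ : w.im ≠ 0) : ¬SameRay ℝ 1 (qpow q w) := by
  have hlog := Real.log_pos hq
  rw [show -(tauq q) / 2 = -Real.pi / Real.log q by rw [tauq]; ring, div_lt_iff₀ hlog] at h₁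
  rw [show tauq q / 2 = Real.pi / Real.log q by rw [tauq]; ring, le_div_iff₀ hlog] at h₂
  have him : (w * (Real.log q : ℂ)).im = w.im * Real.log q := by simp
  rw [Complex.sameRay_iff, qpow, Complex.arg_exp, him,
    (toIocMod_eq_self _).2 ⟨h₁, by linarith⟩]
  simp [h₀, hlog.ne', Complex.exp_ne_zero]

lemma psiBall_I_mul {q : ℝ} (hq : 1 < q) {δ : ℝ} (hδ : δ ≠ 0) (n : ℕ) :
    psiBall q (I * δ) n = ((ballVol q n)⁻¹ * ballPoly q n (Real.exp ((1/2 - δ) * Real.log q))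
      (Real.exp ((1/2 + δ) * Real.log q)) : ℝ) := by
  have hu : (1/2 + I * (I * δ) : ℂ) = (1/2 - δ : ℝ) := by
    push_cast; linear_combination (δ : ℂ) * I_sq
  have hv : (1/2 - I * (I * δ) : ℂ) = (1/2 + δ : ℝ) := by
    push_cast; linear_combination -(δ : ℂ) * I_sq
  rw [psiBall_eq_ballPoly hq (by simpa using hδ), hu, hv, qpow_ofReal, qpow_ofReal,
    ballPoly_ofReal]
  push_cast
  rfl

/-- For `δ ∈ [-1/2, 0)` and every `n ≥ 1`: `ψ_{iδ}(n)` is a positive real and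
`|ψ_{α+iδ}(n)| < ψ_{iδ}(n)` for real `α ∈ (-τ/2, τ/2] \ {0}`. -/
theorem stmt11 (q : ℝ) (hq : 1 < q) (δ : ℝ) (hδ : δ ∈ Set.Ico (-(1/2) : ℝ) 0)
    (n : ℕ) (hn : 1 ≤ n) :
    ((psiBall q (Complex.I * (δ : ℂ)) n).im = 0 ∧
      0 < (psiBall q (Complex.I * (δ : ℂ)) n).re) ∧
    ∀ α : ℝ, -(tauq q) / 2 < α → α ≤ tauq q / 2 → α ≠ 0 →
      ‖psiBall q ((α : ℂ) + Complex.I * (δ : ℂ)) n‖ <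
        (psiBall q (Complex.I * (δ : ℂ)) n).re := by
  have hδ₀ : δ ≠ 0 := hδ.2.ne
  have hB : 0 < (ballVol q n)⁻¹ := inv_pos.2 (ballVol_pos (by linarith) n)
  rw [psiBall_I_mul hq hδ₀, Complex.ofReal_im, Complex.ofReal_re]
  refine ⟨⟨rfl, mul_pos hB (ballPoly_pos hq.le n (Real.exp_nonneg _) (Real.exp_nonneg _))⟩,
    fun α hα₁ hα₂ hα₀ => ?_⟩
  set z : ℂ := α + I * δ
  have hz : z.im = δ := by simp [z]
  rw [psiBall_eq_ballPoly hq (hz ▸ hδ₀), norm_mul, Complex.norm_real, Real.norm_of_nonneg hB.le]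
  refine mul_lt_mul_of_pos_left ?_ hB
  have hu : ‖qpow q (1/2 + I * z)‖ = Real.exp ((1/2 - δ) * Real.log q) := by
    simp [norm_qpow, hz, sub_eq_add_neg]
  have hv : ‖qpow q (1/2 - I * z)‖ = Real.exp ((1/2 + δ) * Real.log q) := by
    simp [norm_qpow, hz, sub_eq_add_neg]
  have hw : (1/2 + I * z).im = α := by simp [z]
  rw [← hu, ← hv]
  exact norm_ballPoly_lt hq.le hn (not_sameRay_one_qpow hq (hw ▸ hα₁) (hw ▸ hα₂) (hw ▸ hα₀)) _
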